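/- arXiv:1909.04107 — 2 statements merged into one kernel-verified Lean document; each statement's English description precedes it below -/
import Mathlib

section
/- Let (c, w) be jointly Gaussian with Var(w) > 0 and Cov(c, w) = ρ. Write c = α + βw + e with β = ρ/Var(w), where e is Gaussian, independent of w, with mean 0. Then for any v, q ∈ ℝ with P(w ≥ q) > 0: if ρ < 0, the map q ↦ P(α + βw + e ≤ v | w ≥ q) is nondecreasing. -/
open MeasureTheory ProbabilityTheory

/-! Since `e` is independent of `w` and `β < 0`, the event `{α + β w + e ≤ v}` is increasing
in `w` for each fixed value of `e`. Splitting `{q ≤ w}` into `{q' ≤ w}` and `{q ≤ w < q'}`,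
the event `T = {e ≤ v - α - β q'}` contains it on the lower piece and is contained in it on the
upper one, so by independence its conditional probability on the lower piece is at most `μ T`,
which is at most its conditional probability on `{q' ≤ w}`; averaging over the two pieces can
only lower it. -/

/-- Covariance of two real random variables. -/
noncomputable def covRV {Ω : Type*} [MeasurableSpace Ω] (μ : Measure Ω) (c w : Ω → ℝ) : ℝ :=
  (∫ ω, c ω * w ω ∂μ) - (∫ ω, c ω ∂μ) * (∫ ω, w ω ∂μ)

section CondMonotone

variable {Ω : Type*} [MeasurableSpace Ω] {μ : Measure Ω} [IsFiniteMeasure μ]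

theorem cond_le_cond_of_subset {A B S : Set Ω} (hA : MeasurableSet A) (hB : MeasurableSet B)
    (hBA : B ⊆ A) (hB0 : μ B ≠ 0) (h : μ (A \ B ∩ S) ≤ μ (A \ B) * μ[S | B]) :
    μ[S | A] ≤ μ[S | B] := by
  have hA0 : μ A ≠ 0 := fun h0 => hB0 (measure_mono_null hBA h0)
  rw [cond_apply hA, ← ENNReal.div_eq_inv_mul, ENNReal.div_le_iff hA0 (measure_ne_top μ A)]
  calc μ (A ∩ S) = μ (B ∩ S) + μ (A \ B ∩ S) := by
        rw [← measure_inter_add_sdiff (A ∩ S) hB, Set.inter_right_comm,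
          Set.inter_eq_right.mpr hBA, Set.inter_sdiff_right_comm]
    _ ≤ μ[S | B] * μ B + μ (A \ B) * μ[S | B] := by
        rw [cond_mul_eq_inter hB]; gcongr
    _ = μ[S | B] * μ A := by
        rw [← measure_inter_add_sdiff A hB, Set.inter_eq_right.mpr hBA]; ring

theorem cond_le_cond_of_indepFun_of_monotone {β : Type*} [MeasurableSpace β]
    {X : Ω → ℝ} {Y : Ω → β} (hX : Measurable X) (hXY : IndepFun X Y μ) {P : ℝ → β → Prop}
    (hP : ∀ y, Monotone (P · y)) (hPm : ∀ x, MeasurableSet {y | P x y}) {q q' : ℝ} (hqq' : q ≤ q')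
    (hq' : μ {ω | q' ≤ X ω} ≠ 0) :
    μ[{ω | P (X ω) (Y ω)} | {ω | q ≤ X ω}] ≤ μ[{ω | P (X ω) (Y ω)} | {ω | q' ≤ X ω}] := by
  set S := {ω | P (X ω) (Y ω)}
  set B := X ⁻¹' Set.Ici q'
  set T := Y ⁻¹' {y | P q' y}
  have hB : MeasurableSet B := hX measurableSet_Ici
  have hindep := indepFun_iff_measure_inter_preimage_eq_mul.mp hXY
  have hT : μ T ≤ μ[S | B] := by
    refine (ENNReal.mul_le_mul_iff_left hq' (measure_ne_top μ B)).mp ?_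
    calc μ T * μ B = μ (B ∩ T) := by rw [mul_comm, hindep _ _ measurableSet_Ici (hPm q')]
      _ ≤ μ (B ∩ S) := measure_mono fun ω ⟨hωB, hωT⟩ => ⟨hωB, hP _ hωB hωT⟩
      _ = μ[S | B] * μ B := (cond_mul_eq_inter hB S μ).symm
  have hlow : X ⁻¹' Set.Ici q \ B = X ⁻¹' Set.Ico q q' := by
    rw [← Set.preimage_sdiff, Set.Ici_sdiff_Ici]
  refine cond_le_cond_of_subset (hX measurableSet_Ici) hB
    (fun ω (hω : q' ≤ X ω) => hqq'.trans hω) hq' ?_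
  calc μ (X ⁻¹' Set.Ici q \ B ∩ S) ≤ μ (X ⁻¹' Set.Ico q q' ∩ T) := by
        rw [hlow]
        exact measure_mono fun ω ⟨hω, hωS⟩ => ⟨hω, hP _ hω.2.le hωS⟩
    _ = μ (X ⁻¹' Set.Ici q \ B) * μ T := by
        rw [hlow, hindep _ _ measurableSet_Ico (hPm q')]
    _ ≤ μ (X ⁻¹' Set.Ici q \ B) * μ[S | B] := by gcongr

end CondMonotone

theorem gaussian_regression_cond_prob_mono_general
    {Ω : Type*} [MeasurableSpace Ω] (μ : Measure Ω) [IsProbabilityMeasure μ]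
    (w e : Ω → ℝ) (hw : Measurable w)
    (hindep : IndepFun w e μ)
    (hvar : 0 < variance w μ)
    (ρ α β : ℝ) (hβ : β = ρ / variance w μ)
    (v : ℝ) (hneg : ρ < 0) :
    ∀ q q' : ℝ, q ≤ q' → 0 < μ {ω | q ≤ w ω} → 0 < μ {ω | q' ≤ w ω} →
      (μ[|{ω | q ≤ w ω}]) {ω | α + β * w ω + e ω ≤ v}
        ≤ (μ[|{ω | q' ≤ w ω}]) {ω | α + β * w ω + e ω ≤ v} := by
  intro q q' hqq' _ hq'
  have hβ_nonpos : β ≤ 0 := hβ ▸ (div_neg_of_neg_of_pos hneg hvar).le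
  have hmono : ∀ y, Monotone fun x => α + β * x + y ≤ v := fun y x x' hxx' hx => by
    linarith [mul_le_mul_of_nonpos_left hxx' hβ_nonpos]
  have hmeas : ∀ x, MeasurableSet {y : ℝ | α + β * x + y ≤ v} := fun x =>
    measurableSet_le (measurable_const.add measurable_id) measurable_const
  exact cond_le_cond_of_indepFun_of_monotone hw hindep hmono hmeas hqq' hq'.ne'

/-- Regression decomposition of a bivariate Gaussian: `c = α + β w + e` with
`β = Cov(c,w)/Var(w)` and `e` Gaussian, mean zero, independent of `w`. If
`Cov(c,w) < 0` then `q ↦ P(α + β w + e ≤ v ∣ w ≥ q)` is nondecreasing (over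
thresholds with positive survival probability). -/
theorem gaussian_regression_cond_prob_mono
    {Ω : Type*} [MeasurableSpace Ω] (μ : Measure Ω) [IsProbabilityMeasure μ]
    (c w e : Ω → ℝ) (hw : Measurable w) (he : Measurable e)
    (mw : ℝ) (vw : NNReal) (hwG : Measure.map w μ = gaussianReal mw vw)
    (ve : NNReal) (heG : Measure.map e μ = gaussianReal 0 ve)
    (hindep : IndepFun w e μ)
    (hvar : 0 < variance w μ)
    (ρ α β : ℝ) (hρ : ρ = covRV μ c w) (hβ : β = ρ / variance w μ)
    (hdecomp : ∀ ω, c ω = α + β * w ω + e ω)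
    (v : ℝ) (hneg : ρ < 0) :
    ∀ q q' : ℝ, q ≤ q' → 0 < μ {ω | q ≤ w ω} → 0 < μ {ω | q' ≤ w ω} →
      (μ[|{ω | q ≤ w ω}]) {ω | α + β * w ω + e ω ≤ v}
        ≤ (μ[|{ω | q' ≤ w ω}]) {ω | α + β * w ω + e ω ≤ v} :=
  gaussian_regression_cond_prob_mono_general μ w e hw hindep hvar ρ α β hβ v hneg
end

section
/- Let v : [0,1] → ℝ be continuous and nondecreasing with v(0) = 0, and let F_q(t) = P(c ≤ t | w ≥ q − t₀) for a fixed t₀, where F_q is continuous in t. Define φ_q(x) = F_q(v(x)). If for every t the map q ↦ F_q(t) is nondecreasing, then for q' > q every fixed point x of φ_q satisfies φ_{q'}(x) ≥ x; in particular if φ_{q'} is nondecreasing, the largest fixed point under q' is ≥ the largest fixed point under q. -/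
open Set

/-- Assembly of Theorem 1(1): let `v : [0,1] → ℝ` be continuous and nondecreasing with
`v 0 = 0`, and let `F q` be a (conditional c.d.f.) map, continuous in `t`, with values in
`[0,1]`, such that `q ↦ F q t` is nondecreasing for every `t`. Set `φ q x = F q (v x)`.
Then for `q' > q` every fixed point `x` of `φ q` satisfies `φ q' x ≥ x`; and if `φ q'`
is nondecreasing on `[0,1]`, the largest fixed point under `q'` is `≥` the largest
fixed point under `q`. -/
theorem tax_raises_max_equilibrium
    (v : ℝ → ℝ) (hvc : ContinuousOn v (Icc 0 1)) (hvm : MonotoneOn v (Icc 0 1))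
    (hv0 : v 0 = 0)
    (F : ℝ → ℝ → ℝ)
    (hFc : ∀ q, Continuous (F q))
    (hFrange : ∀ q t, F q t ∈ Icc (0:ℝ) 1)
    (hFmono : ∀ t, Monotone (fun q => F q t))
    (φ : ℝ → ℝ → ℝ) (hφ : ∀ q x, φ q x = F q (v x)) :
    ∀ q q' : ℝ, q < q' →
      (∀ x ∈ Icc (0:ℝ) 1, φ q x = x → x ≤ φ q' x) ∧
      (MonotoneOn (φ q') (Icc 0 1) →
        ∀ a b : ℝ, IsGreatest {x ∈ Icc (0:ℝ) 1 | φ q x = x} a →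
          IsGreatest {x ∈ Icc (0:ℝ) 1 | φ q' x = x} b → a ≤ b) := by
  intro q q' hqq'
  have key : ∀ x ∈ Icc (0:ℝ) 1, φ q x = x → x ≤ φ q' x := by
    intro x _ hx
    calc x = φ q x := hx.symm
    _ = F q (v x) := hφ q x
    _ ≤ F q' (v x) := hFmono (v x) hqq'.le
    _ = φ q' x := (hφ q' x).symm
  refine ⟨key, ?_⟩
  intro hmono a b ha hb
  obtain ⟨⟨haI, hafix⟩, _⟩ := ha
  -- Tarski: sup of the pre-fixed-point set is a fixed point
  set S : Set ℝ := {x ∈ Icc (0:ℝ) 1 | x ≤ φ q' x} with hS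
  have haS : a ∈ S := ⟨haI, key a haI hafix⟩
  have hSne : S.Nonempty := ⟨a, haS⟩
  have hSbdd : BddAbove S := ⟨1, fun x hx => hx.1.2⟩
  set s := sSup S with hs
  have hsI : s ∈ Icc (0:ℝ) 1 := by
    constructor
    · exact le_csSup hSbdd haS |>.trans' haI.1
    · exact csSup_le hSne (fun x hx => hx.1.2)
  have hrange : ∀ x, φ q' x ∈ Icc (0:ℝ) 1 := fun x => (hφ q' x) ▸ hFrange q' (v x)
  have hle : s ≤ φ q' s := by
    apply csSup_le hSne
    intro x hx
    exact hx.2.trans (hmono hx.1 hsI (le_csSup hSbdd hx))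
  have hfixS : φ q' s ∈ S := ⟨hrange s, hmono hsI (hrange s) hle⟩
  have hfix : φ q' s = s := le_antisymm (le_csSup hSbdd hfixS) hle
  have hsb : s ≤ b := hb.2 ⟨hsI, hfix⟩
  exact (le_csSup hSbdd haS).trans hsb
end
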